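/- In the harmonic minor key (0,2,3,5,7,8,11) and in the harmonic major key (0,2,4,5,7,8,11), every one of the seven seventh-chord types of classical harmony (augmented major, major minor, dominant, harmonic minor, minor major, semi-diminished, diminished) occurs as a seventh chord built on some degree of the scale—in fact, assigning to each degree k the seventh chord on degrees k, k+2, k+4, k+6 (mod 7) yields, in the harmonic minor, all seven types each exactly once. -/
import Mathlib


/- Interval (in semitones, mod 12) from degree `k` of a scale `s` to degree
`k + j` (degrees mod 7). -/
def ival (s : Fin 7 → ℕ) (k j : Fin 7) : ℕ := (s (k + j) + 12 - s k) % 12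

/- The seventh chord on degree `k`: its (third, fifth, seventh) intervals. -/
def seventhChord (s : Fin 7 → ℕ) (k : Fin 7) : ℕ × ℕ × ℕ :=
  (ival s k 2, ival s k 4, ival s k 6)

/- The seven seventh-chord types of classical harmony. -/
def seventhTypes : Set (ℕ × ℕ × ℕ) :=
  {(4, 8, 11), (4, 7, 11), (4, 7, 10), (3, 7, 11), (3, 7, 10), (3, 6, 10), (3, 6, 9)}

/- In the harmonic minor (0,2,3,5,7,8,11) and harmonic major (0,2,4,5,7,8,11)
scales, every one of the seven seventh-chord types occurs on some degree; in
the harmonic minor each type occurs exactly once. -/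
theorem stmt18 :
    (∀ τ ∈ seventhTypes, ∃ k : Fin 7,
        seventhChord ![0, 2, 3, 5, 7, 8, 11] k = τ) ∧
    (∀ τ ∈ seventhTypes, ∃ k : Fin 7,
        seventhChord ![0, 2, 4, 5, 7, 8, 11] k = τ) ∧
    Function.Injective (seventhChord ![0, 2, 3, 5, 7, 8, 11]) := by
  simp only [seventhTypes, Set.mem_insert_iff, Set.mem_singleton_iff]
  refine ⟨?_, ?_, ?_⟩ <;>
    first
      | decide
      | (rintro τ (rfl | rfl | rfl | rfl | rfl | rfl | rfl) <;> decide)
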